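/- arXiv:2402.18675 — 2 statements merged into one kernel-verified Lean document; each statement's English description precedes it below -/
import Mathlib

section
/- The map sending a heterogeneous out-tree (par, σ) to its heterogeneous dependency matrix D(par, σ) is injective: if two heterogeneous out-trees (par₁, σ₁) and (par₂, σ₂) with N non-root nodes satisfy D(par₁, σ₁) = D(par₂, σ₂), then par₁ = par₂ and σ₁ = σ₂. -/
/-!
Row `i` of `D(par, σ)` is the image under `σ` of the chain of `i`, the node together with its
ancestors. Equal matrices thus give a permutation `π = σ₂⁻¹ σ₁` carrying each chain of `par₁`
onto the chain of `par₂` at the same node, and well-founded induction along `par₁` forces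
`π = 1`. So `σ₁ = σ₂` and the two trees have the same chains; for acyclic parent functions
the chains determine the ancestor relation, and the ancestor relation determines the parents.
-/

/-- Iterate the parent function `k` times starting from node `i`. -/
def parIter {N : ℕ} (par : Fin N → Option (Fin N)) : ℕ → Fin N → Option (Fin N)
  | 0, i => some i
  | k + 1, i => (par i).bind (parIter par k)

/-- `a` is an ancestor of `i`: `a` is reached from `i` by iterating `par` at least once. -/
def IsAncestor {N : ℕ} (par : Fin N → Option (Fin N)) (a i : Fin N) : Prop :=
  ∃ k : ℕ, 0 < k ∧ parIter par k i = some a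

/-- `par` is a well-founded parent function. -/
def WFParent {N : ℕ} (par : Fin N → Option (Fin N)) : Prop :=
  WellFounded (fun a i : Fin N => par i = some a)

open Classical in
/-- The heterogeneous dependency matrix of the heterogeneous out-tree `(par, σ)`:
`D i j = 1` iff `σ⁻¹ j` equals `i` or is an ancestor of `i`. -/
noncomputable def depMatrix {N : ℕ} (par : Fin N → Option (Fin N)) (σ : Equiv.Perm (Fin N)) :
    Fin N → Fin N → Bool :=
  fun i j => decide (σ.symm j = i ∨ IsAncestor par (σ.symm j) i)

/-- The depth of node `i`: the least `k ≥ 1` with `parIter par k i = none`. -/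
noncomputable def treeDepth {N : ℕ} (par : Fin N → Option (Fin N)) (i : Fin N) : ℕ :=
  sInf {k : ℕ | 1 ≤ k ∧ parIter par k i = none}

/-- Node `i` is a leaf: no node has `i` as its parent. -/
def IsLeaf {N : ℕ} (par : Fin N → Option (Fin N)) (i : Fin N) : Prop :=
  ∀ x, par x ≠ some i

/-- Tree dilation `di^{i→j}`: replace `par i` by `some j`. -/
def treeDilate {N : ℕ} (par : Fin N → Option (Fin N)) (i j : Fin N) :
    Fin N → Option (Fin N) :=
  Function.update par i (some j)

/-- Tree absorption `ab^{j→i}`: replace `par i` by `none`. -/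
def treeAbsorb {N : ℕ} (par : Fin N → Option (Fin N)) (i : Fin N) :
    Fin N → Option (Fin N) :=
  Function.update par i none

/-- Applicability of tree dilation `di^{i→j}`. -/
def DilateOK {N : ℕ} (par : Fin N → Option (Fin N)) (i j : Fin N) : Prop :=
  par i = none ∧ j ≠ i ∧ ¬ IsAncestor par i j

/-- Applicability of tree absorption `ab^{j→i}`. -/
def AbsorbOK {N : ℕ} (par : Fin N → Option (Fin N)) (i j : Fin N) : Prop :=
  IsLeaf par i ∧ par i = some j

/-- Number of ones in a binary row. -/
def onesCount {N : ℕ} (r : Fin N → Bool) : ℕ :=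
  (Finset.univ.filter fun c => r c = true).card

/-- Entrywise XOR of two rows. -/
def rowXor {N : ℕ} (r s : Fin N → Bool) : Fin N → Bool :=
  fun c => xor (r c) (s c)

/-- Replace row `i` of `S` by the XOR of rows `i` and `j`. -/
def matUpdateXor {K N : ℕ} (S : Fin K → Fin N → Bool) (i j : Fin K) :
    Fin K → Fin N → Bool :=
  Function.update S i (rowXor (S i) (S j))

/-- Applicability of matrix absorption `ab^{j→i}`. -/
def MatAbsorbOK {K N : ℕ} (S : Fin K → Fin N → Bool) (i j : Fin K) : Prop :=
  onesCount (rowXor (S i) (S j)) = 1 ∧ onesCount (S j) < onesCount (S i)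

/-- Applicability of matrix dilation `di^{i→j}`. -/
def MatDilateOK {K N : ℕ} (S : Fin K → Fin N → Bool) (i j : Fin K) : Prop :=
  onesCount (S i) = 1 ∧ ∀ c, ¬ (S i c = true ∧ S j c = true)

/-- A permutation matrix: exactly one `1` in each row and each column. -/
def IsPermMatrix {N : ℕ} (S : Fin N → Fin N → Bool) : Prop :=
  (∀ i, ∃! j, S i j = true) ∧ (∀ j, ∃! i, S i j = true)

/-- Column set `S_c` of column `c`. -/
def colSet {K N : ℕ} (D : Fin K → Fin N → Bool) (c : Fin N) : Set (Fin K) :=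
  {r | D r c = true}

/-- Unique element set `J_{S_c}`: `S_c` minus the union of all column sets that are
proper subsets of `S_c`. -/
def JSet {K N : ℕ} (D : Fin K → Fin N → Bool) (c : Fin N) : Set (Fin K) :=
  {r | r ∈ colSet D c ∧ ∀ c' : Fin N, colSet D c' ⊂ colSet D c → r ∉ colSet D c'}

/-- `1°`: no row is all-zero. -/
def Cond1 {K N : ℕ} (D : Fin K → Fin N → Bool) : Prop :=
  ∀ r, ∃ c, D r c = true

/-- `2°`: no column is all-zero. -/
def Cond2 {K N : ℕ} (D : Fin K → Fin N → Bool) : Prop :=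
  ∀ c, ∃ r, D r c = true

/-- `3°`: no two distinct rows are equal. -/
def Cond3 {K N : ℕ} (D : Fin K → Fin N → Bool) : Prop :=
  ∀ r₁ r₂, (∀ c, D r₁ c = D r₂ c) → r₁ = r₂

/-- `4°`: no two distinct columns are equal. -/
def Cond4 {K N : ℕ} (D : Fin K → Fin N → Bool) : Prop :=
  ∀ c₁ c₂, (∀ r, D r c₁ = D r c₂) → c₁ = c₂

/-- `5°`: any two column sets are nested or disjoint. -/
def Cond5 {K N : ℕ} (D : Fin K → Fin N → Bool) : Prop :=
  ∀ c₁ c₂, colSet D c₁ ⊆ colSet D c₂ ∨ colSet D c₂ ⊆ colSet D c₁ ∨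
    colSet D c₁ ∩ colSet D c₂ = ∅

/-- `6°`: every unique element set has exactly one element. -/
def Cond6 {K N : ℕ} (D : Fin K → Fin N → Bool) : Prop :=
  ∀ c, ∃! r, r ∈ JSet D c

/-- Condition set `P = {1°, 2°, 3°, 4°, 5°}`. -/
def CondP {K N : ℕ} (D : Fin K → Fin N → Bool) : Prop :=
  Cond1 D ∧ Cond2 D ∧ Cond3 D ∧ Cond4 D ∧ Cond5 D

/-- Condition set `P⁻ = {1°, 3°, 5°}`. -/
def CondPminus {K N : ℕ} (D : Fin K → Fin N → Bool) : Prop :=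
  Cond1 D ∧ Cond3 D ∧ Cond5 D

/-- One step of matrix absorption or matrix dilation. -/
def MatStep {N : ℕ} (S T : Fin N → Fin N → Bool) : Prop :=
  ∃ i j, (MatAbsorbOK S i j ∨ MatDilateOK S i j) ∧ T = matUpdateXor S i j

section OutTree

variable {N : ℕ} {par par₁ par₂ : Fin N → Option (Fin N)} {a b i p : Fin N}

theorem parIter_add (par : Fin N → Option (Fin N)) (k l : ℕ) (i : Fin N) :
    parIter par (k + l) i = (parIter par k i).bind (parIter par l) := by
  induction k generalizing i with
  | zero => simp [parIter]
  | succ k ih =>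
    rw [Nat.add_right_comm]
    cases hp : par i <;> simp [parIter, hp, ih]

theorem IsAncestor.trans (hab : IsAncestor par a b) (hbi : IsAncestor par b i) :
    IsAncestor par a i := by
  obtain ⟨l, hl, hla⟩ := hab
  obtain ⟨k, hk, hkb⟩ := hbi
  exact ⟨k + l, by omega, by simp [parIter_add, hkb, hla]⟩

theorem isAncestor_of_par_eq_some (hp : par i = some p) : IsAncestor par p i :=
  ⟨1, one_pos, by simp [parIter, hp]⟩

theorem not_isAncestor_of_par_eq_none (hp : par i = none) (a : Fin N) :
    ¬ IsAncestor par a i := by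
  rintro ⟨_ | k, hk, hiter⟩
  · omega
  · simp [parIter, hp] at hiter

theorem isAncestor_iff_of_par_eq_some (hp : par i = some p) :
    IsAncestor par a i ↔ a = p ∨ IsAncestor par a p := by
  constructor
  · rintro ⟨_ | _ | k, hk, hiter⟩
    · omega
    · simp_all [parIter]
    · exact Or.inr ⟨k + 1, k.succ_pos, by simpa [parIter, hp] using hiter⟩
  · rintro (rfl | ⟨k, hk, hkit⟩)
    · exact isAncestor_of_par_eq_some hp
    · exact ⟨k + 1, k.succ_pos, by simp [parIter, hp, hkit]⟩

theorem WFParent.not_isAncestor_self (h : WFParent par) (a : Fin N) :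
    ¬ IsAncestor par a a := by
  induction a using h.induction with
  | _ a ih =>
    intro haa
    cases hp : par a with
    | none => exact not_isAncestor_of_par_eq_none hp a haa
    | some b =>
      rcases (isAncestor_iff_of_par_eq_some hp).mp haa with rfl | hab
      · exact ih a hp (isAncestor_of_par_eq_some hp)
      · exact ih b hp (isAncestor_of_par_eq_some hp |>.trans hab)

def ancChain (par : Fin N → Option (Fin N)) (i : Fin N) : Set (Fin N) :=
  {a | a = i ∨ IsAncestor par a i}

theorem ancChain_of_par_eq_none (hp : par i = none) : ancChain par i = {i} := by
  ext a
  simp [ancChain, not_isAncestor_of_par_eq_none hp a]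

theorem ancChain_of_par_eq_some (hp : par i = some p) :
    ancChain par i = insert i (ancChain par p) := by
  ext a
  simp [ancChain, isAncestor_iff_of_par_eq_some hp]

theorem WFParent.not_mem_ancChain_of_par_eq_some (h : WFParent par) (hp : par i = some p) :
    i ∉ ancChain par p := by
  rintro (rfl | hip)
  · exact h.not_isAncestor_self i (isAncestor_of_par_eq_some hp)
  · exact h.not_isAncestor_self i (hip.trans (isAncestor_of_par_eq_some hp))

theorem WFParent.isAncestor_iff (h : WFParent par) :
    IsAncestor par a i ↔ a ≠ i ∧ a ∈ ancChain par i := by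
  constructor
  · intro hai
    exact ⟨fun heq => h.not_isAncestor_self a (heq ▸ hai), Or.inr hai⟩
  · rintro ⟨hne, rfl | hai⟩
    exacts [absurd rfl hne, hai]

/-- At a root the chain is a singleton; elsewhere it is the node inserted into its parent's
chain, which `π` already fixes by induction and which does not contain the node. -/
theorem WFParent.perm_eq_self_of_mem_ancChain_iff (h₁ : WFParent par₁) (π : Equiv.Perm (Fin N))
    (hπ : ∀ i a, a ∈ ancChain par₁ i ↔ π a ∈ ancChain par₂ i) (a : Fin N) : π a = a := by
  suffices ∀ i, ∀ b ∈ ancChain par₁ i, π b = b from this a a (Or.inl rfl)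
  intro i
  induction i using h₁.induction with
  | _ i ih =>
    have hi : π.symm i ∈ ancChain par₁ i := (hπ i _).mpr (by simp [ancChain])
    have hfix : π i = i := by
      suffices π.symm i = i by simpa using (congrArg π this).symm
      cases hp : par₁ i with
      | none => rwa [ancChain_of_par_eq_none hp, Set.mem_singleton_iff] at hi
      | some p =>
        rw [ancChain_of_par_eq_some hp] at hi
        refine hi.resolve_right fun hip => h₁.not_mem_ancChain_of_par_eq_some hp ?_
        have hπi : π.symm i = i := by simpa using (ih p hp _ hip).symm
        exact hπi ▸ hip
    cases hp : par₁ i with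
    | none => simp [ancChain_of_par_eq_none hp, hfix]
    | some p =>
      rw [ancChain_of_par_eq_some hp]
      rintro a (rfl | ha)
      exacts [hfix, ih p hp a ha]

theorem WFParent.eq_of_isAncestor_eq (h₁ : WFParent par₁)
    (hA : IsAncestor par₁ = IsAncestor par₂) : par₁ = par₂ := by
  have hiff : ∀ a i, IsAncestor par₁ a i ↔ IsAncestor par₂ a i := fun a i => by rw [hA]
  funext i
  cases hp₁ : par₁ i with
  | none =>
    cases hp₂ : par₂ i with
    | none => rfl
    | some q =>
      exact absurd ((hiff q i).mpr (isAncestor_of_par_eq_some hp₂))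
        (not_isAncestor_of_par_eq_none hp₁ q)
  | some p =>
    cases hp₂ : par₂ i with
    | none =>
      exact absurd ((hiff p i).mp (isAncestor_of_par_eq_some hp₁))
        (not_isAncestor_of_par_eq_none hp₂ p)
    | some q =>
      congr 1
      by_contra hpq
      rcases (isAncestor_iff_of_par_eq_some hp₂).mp
          ((hiff p i).mp (isAncestor_of_par_eq_some hp₁)) with h | hpq₂
      · exact hpq h
      rcases (isAncestor_iff_of_par_eq_some hp₁).mp
          ((hiff q i).mpr (isAncestor_of_par_eq_some hp₂)) with h | hqp₁
      · exact hpq h.symm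
      exact h₁.not_isAncestor_self p (((hiff p q).mpr hpq₂).trans hqp₁)

theorem depMatrix_eq_true_iff (σ : Equiv.Perm (Fin N)) (i j : Fin N) :
    depMatrix par σ i j = true ↔ σ.symm j ∈ ancChain par i := by
  simp [depMatrix, ancChain]

end OutTree

/-- The map sending a heterogeneous out-tree to its heterogeneous
dependency matrix is injective. -/
theorem depMatrix_injective {N : ℕ} (par₁ par₂ : Fin N → Option (Fin N))
    (σ₁ σ₂ : Equiv.Perm (Fin N)) (h₁ : WFParent par₁) (h₂ : WFParent par₂)
    (hD : depMatrix par₁ σ₁ = depMatrix par₂ σ₂) :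
    par₁ = par₂ ∧ σ₁ = σ₂ := by
  have hrows : ∀ i a, a ∈ ancChain par₁ i ↔ σ₁.trans σ₂.symm a ∈ ancChain par₂ i := by
    intro i a
    have := congrFun (congrFun hD i) (σ₁ a)
    rwa [Bool.eq_iff_iff, depMatrix_eq_true_iff, depMatrix_eq_true_iff,
      Equiv.symm_apply_apply] at this
  have hfix := h₁.perm_eq_self_of_mem_ancChain_iff _ hrows
  have hσ : σ₁ = σ₂ := Equiv.ext fun a => by simpa using congrArg σ₂ (hfix a)
  have hchains : ancChain par₁ = ancChain par₂ := by
    funext i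
    ext a
    rw [hrows, hfix]
  refine ⟨h₁.eq_of_isAncestor_eq ?_, hσ⟩
  funext a i
  rw [h₁.isAncestor_iff, h₂.isAncestor_iff, hchains]
end

section
/- If a binary matrix D satisfies conditions {1°, 5°, 6°} or conditions {1°, 3°, 5°}, then each row of D corresponds to a unique unique element set: every row r belongs to J_{S_c} for some column c, and no two distinct rows r₁ ≠ r₂ belong to the same unique element set J_{S_c}. -/
section JSet

variable {K N : ℕ} (D : Fin K → Fin N → Bool)

/-- Take a column whose set is `⊂`-minimal among the columns containing `r`. -/
theorem exists_mem_JSet_of_mem_colSet {r : Fin K} {c₀ : Fin N} (hr : r ∈ colSet D c₀) :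
    ∃ c, r ∈ JSet D c := by
  obtain ⟨c, hc, hmin⟩ :=
    (InvImage.wf (colSet D) wellFounded_lt).has_min {c | r ∈ colSet D c} ⟨c₀, hr⟩
  exact ⟨c, hc, fun c' hlt hrc' => hmin c' hrc' hlt⟩

variable {D}

theorem Cond1.exists_mem_JSet (h1 : Cond1 D) (r : Fin K) : ∃ c, r ∈ JSet D c :=
  exists_mem_JSet_of_mem_colSet D (h1 r).choose_spec

theorem Cond5.mem_colSet_of_mem_JSet (h5 : Cond5 D) {c c' : Fin N} {r₁ r₂ : Fin K}
    (h₁ : r₁ ∈ JSet D c) (h₂ : r₂ ∈ JSet D c) (hr₁ : r₁ ∈ colSet D c') : r₂ ∈ colSet D c' := by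
  by_contra hr₂
  rcases h5 c' c with hsub | hsup | hdisj
  · exact h₁.2 c' ⟨hsub, fun hsup => hr₂ (hsup h₂.1)⟩ hr₁
  · exact hr₂ (hsup h₂.1)
  · exact (Set.eq_empty_iff_forall_notMem.mp hdisj) r₁ ⟨hr₁, h₁.1⟩

theorem Cond5.row_eq_of_mem_JSet (h5 : Cond5 D) {c : Fin N} {r₁ r₂ : Fin K}
    (h₁ : r₁ ∈ JSet D c) (h₂ : r₂ ∈ JSet D c) (c' : Fin N) : D r₁ c' = D r₂ c' :=
  Bool.eq_iff_iff.mpr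
    ⟨h5.mem_colSet_of_mem_JSet h₁ h₂, h5.mem_colSet_of_mem_JSet h₂ h₁⟩

theorem Cond5.subsingleton_JSet (h3 : Cond3 D) (h5 : Cond5 D) (c : Fin N) :
    (JSet D c).Subsingleton :=
  fun _ h₁ _ h₂ => h3 _ _ (h5.row_eq_of_mem_JSet h₁ h₂)

theorem Cond6.subsingleton_JSet (h6 : Cond6 D) (c : Fin N) : (JSet D c).Subsingleton := by
  obtain ⟨r, -, hr⟩ := h6 c
  exact fun r₁ h₁ r₂ h₂ => (hr r₁ h₁).trans (hr r₂ h₂).symm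

end JSet

/-- If a binary matrix satisfies `{1°, 5°, 6°}` or `{1°, 3°, 5°}`,
then every row belongs to some unique element set, and no two distinct rows belong to
the same unique element set. -/
theorem rows_correspond_to_unique_JSet {K N : ℕ} (D : Fin K → Fin N → Bool)
    (h : (Cond1 D ∧ Cond5 D ∧ Cond6 D) ∨ (Cond1 D ∧ Cond3 D ∧ Cond5 D)) :
    (∀ r : Fin K, ∃ c : Fin N, r ∈ JSet D c) ∧
    (∀ (c : Fin N) (r₁ r₂ : Fin K), r₁ ∈ JSet D c → r₂ ∈ JSet D c → r₁ = r₂) := by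
  have h1 : Cond1 D := h.elim (·.1) (·.1)
  have hsub : ∀ c, (JSet D c).Subsingleton := by
    rcases h with ⟨-, -, h6⟩ | ⟨-, h3, h5⟩
    · exact h6.subsingleton_JSet
    · exact h5.subsingleton_JSet h3
  exact ⟨h1.exists_mem_JSet, fun c _ _ h₁ h₂ => hsub c h₁ h₂⟩
end
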